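/- Let a, b ∈ m ⊂ ℂ[[x,y]], so that ω = a dx + b dy is a singular 1-form, and let φ(t) = (t^n, y(t)) with n ≥ 1 and ord_t y(t) ≥ n (the tangent cone of the branch Γ parametrized by φ is not x = 0). Set ȳ(t) = y(t)/t^n ∈ ℂ[[t]] and φ̄(t) = (t^n, ȳ(t)) (the strict transform parametrization under the blow-up π(x,y) = (x, x·y)), and define ā, b̄ ∈ ℂ[[x,y]] by ā(x,y) = (a(x, x·y) + y·b(x, x·y))/x — the numerator is divisible by x since a, b ∈ m — and b̄(x,y) = b(x, x·y), so that ω̄ = ā dx + b̄ dy is the pull-back form π*ω divided by x. Then ord_t( a(t^n,y(t))·n·t^{n−1} + b(t^n,y(t))·y'(t) ) = n + ord_t( ā(t^n,ȳ(t))·n·t^{n−1} + b̄(t^n,ȳ(t))·ȳ'(t) ) (as an identity in ℕ∞); equivalently υ_Γ(ω) = υ_{Γ̄}(ω̄) + n. -/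

import Mathlib

/-!
STATEMENT 8: behaviour of the contact of a singular 1-form with a branch under
one blow-up: `υ_Γ(ω) = υ_{Γ̄}(ω̄) + n`, stated as the order identity
`ord_t(a(φ)·n·t^{n−1} + b(φ)·y') = n + ord_t(ā(φ̄)·n·t^{n−1} + b̄(φ̄)·ȳ')`.

Substitution is defined via `tsum`; in every instance appearing below the
family of contributions to each coefficient has finite support (for the
original branch because `ord_t y ≥ n ≥ 1`, and for the strict transform because
`ā` and `b̄` come from the blow-up substitution, so the exponent of `y` in
their monomials is bounded by the exponent of `x` plus two), so the `tsum` is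
the honest (finite) sum.
-/

open PowerSeries

/-- Substitution of `(x(t), y(t))` into a two-variable formal power series,
coefficientwise via `tsum`. -/
noncomputable def substGen (xt yt : PowerSeries ℂ) (f : MvPowerSeries (Fin 2) ℂ) :
    PowerSeries ℂ :=
  PowerSeries.mk fun k =>
    ∑' ij : ℕ × ℕ,
      MvPowerSeries.coeff (Finsupp.single 0 ij.1 + Finsupp.single 1 ij.2) f *
        PowerSeries.coeff k (xt ^ ij.1 * yt ^ ij.2)

/-- The maximal ideal of `ℂ[[x,y]]`: series with zero constant term. -/
noncomputable def mIdeal : Ideal (MvPowerSeries (Fin 2) ℂ) :=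
  RingHom.ker (MvPowerSeries.constantCoeff : MvPowerSeries (Fin 2) ℂ →+* ℂ)

/-- Composition with the blow-up chart `(x, y) ↦ (x, x·y)`:
`f(x, x·y) = Σ c_{ij} x^{i+j} y^j`, so the coefficient of `x^p y^q` is
`c_{p−q, q}` when `q ≤ p`, and `0` otherwise. -/
noncomputable def blowSubst (f : MvPowerSeries (Fin 2) ℂ) : MvPowerSeries (Fin 2) ℂ :=
  fun d =>
    if d 1 ≤ d 0 then
      MvPowerSeries.coeff (Finsupp.single 0 (d 0 - d 1) + Finsupp.single 1 (d 1)) f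
    else 0

/-!
Substituting the branch `(tⁿ, tⁿ·ȳ)` into `f` is the same as substituting its strict transform
`(tⁿ, ȳ)` into `f(x, x·y)`. Evaluating `x·ā = a(x, xy) + y·b(x, xy)` on `φ̄` therefore gives
`a(φ) = tⁿ·ā(φ̄) − ȳ·b̄(φ̄)`, and with `y' = n tⁿ⁻¹ ȳ + tⁿ ȳ'` the two `ȳ`-terms cancel:
the form evaluated on `φ` is `tⁿ` times `ω̄` evaluated on `φ̄`.
-/

noncomputable abbrev coeff₂ (i j : ℕ) (f : MvPowerSeries (Fin 2) ℂ) : ℂ :=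
  MvPowerSeries.coeff (Finsupp.single 0 i + Finsupp.single 1 j) f

/-- `substGen` is a `tsum` coefficientwise, so it is additive only on summable families. -/
def SubstSummable (xt yt : PowerSeries ℂ) (f : MvPowerSeries (Fin 2) ℂ) : Prop :=
  ∀ k, Summable fun ij : ℕ × ℕ => coeff₂ ij.1 ij.2 f * coeff k (xt ^ ij.1 * yt ^ ij.2)

section Coefficients

variable (f : MvPowerSeries (Fin 2) ℂ)

lemma coeff₂_blowSubst (i j : ℕ) :
    coeff₂ i j (blowSubst f) = if j ≤ i then coeff₂ (i - j) j f else 0 := by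
  simp [coeff₂, blowSubst, MvPowerSeries.coeff_apply]

lemma coeff₂_X_zero_mul_of_left_eq_zero (j : ℕ) :
    coeff₂ 0 j (MvPowerSeries.X 0 * f) = 0 := by
  rw [coeff₂, MvPowerSeries.X_def, MvPowerSeries.coeff_monomial_mul, if_neg]
  simp [Finsupp.le_def]

lemma coeff₂_X_zero_mul_succ (i j : ℕ) :
    coeff₂ (i + 1) j (MvPowerSeries.X 0 * f) = coeff₂ i j f := by
  rw [coeff₂, MvPowerSeries.X_def, Finsupp.single_add, add_comm (Finsupp.single 0 i), add_assoc,
    MvPowerSeries.coeff_add_monomial_mul, one_mul]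

lemma coeff₂_X_one_mul_of_right_eq_zero (i : ℕ) :
    coeff₂ i 0 (MvPowerSeries.X 1 * f) = 0 := by
  rw [coeff₂, MvPowerSeries.X_def, MvPowerSeries.coeff_monomial_mul, if_neg]
  simp [Finsupp.le_def]

lemma coeff₂_X_one_mul_succ (i j : ℕ) :
    coeff₂ i (j + 1) (MvPowerSeries.X 1 * f) = coeff₂ i j f := by
  rw [coeff₂, MvPowerSeries.X_def, Finsupp.single_add, ← add_assoc,
    add_comm _ (Finsupp.single 1 1), MvPowerSeries.coeff_add_monomial_mul, one_mul]

end Coefficients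

section Substitution

variable (xt yt : PowerSeries ℂ) (f g : MvPowerSeries (Fin 2) ℂ)

lemma coeff_substGen (k : ℕ) :
    coeff k (substGen xt yt f) =
      ∑' ij : ℕ × ℕ, coeff₂ ij.1 ij.2 f * coeff k (xt ^ ij.1 * yt ^ ij.2) :=
  coeff_mk _ _

theorem substGen_blowSubst : substGen xt yt (blowSubst f) = substGen xt (xt * yt) f := by
  ext k
  have hsupp : Function.support (fun pq : ℕ × ℕ =>
      coeff₂ pq.1 pq.2 (blowSubst f) * coeff k (xt ^ pq.1 * yt ^ pq.2)) ⊆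
      Set.range fun ij : ℕ × ℕ => (ij.1 + ij.2, ij.2) := by
    rintro ⟨p, q⟩ hpq
    have hqp : q ≤ p := by
      by_contra hqp
      exact hpq (by simp [coeff₂_blowSubst, hqp])
    exact ⟨(p - q, q), by simp [hqp]⟩
  have hinj : Function.Injective fun ij : ℕ × ℕ => (ij.1 + ij.2, ij.2) :=
    fun _ _ h => by simp only [Prod.ext_iff] at h ⊢; omega
  rw [coeff_substGen, coeff_substGen, ← hinj.tsum_eq hsupp]
  refine tsum_congr fun ij => ?_
  rw [coeff₂_blowSubst, if_pos (Nat.le_add_left _ _), Nat.add_sub_cancel, pow_add, mul_pow,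
    mul_assoc]

theorem substGen_X_pow_X_zero_mul (n : ℕ) :
    substGen (X ^ n) yt (MvPowerSeries.X 0 * f) = X ^ n * substGen (X ^ n) yt f := by
  ext k
  have hsupp : Function.support (fun pq : ℕ × ℕ =>
      coeff₂ pq.1 pq.2 (MvPowerSeries.X 0 * f) * coeff k ((X ^ n) ^ pq.1 * yt ^ pq.2)) ⊆
      Set.range fun ij : ℕ × ℕ => (ij.1 + 1, ij.2) := by
    rintro ⟨_ | p, q⟩ hpq
    · simp [coeff₂_X_zero_mul_of_left_eq_zero] at hpq
    · exact ⟨(p, q), rfl⟩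
  have hinj : Function.Injective fun ij : ℕ × ℕ => (ij.1 + 1, ij.2) :=
    fun _ _ h => by simp only [Prod.ext_iff] at h ⊢; omega
  rw [coeff_substGen, ← hinj.tsum_eq hsupp, coeff_X_pow_mul', coeff_substGen]
  simp only [coeff₂_X_zero_mul_succ, pow_succ', mul_assoc, coeff_X_pow_mul']
  split_ifs <;> simp

theorem coeff_mul_substGen (hf : SubstSummable xt yt f) (u : PowerSeries ℂ) (k : ℕ) :
    coeff k (u * substGen xt yt f) =
      ∑' ij : ℕ × ℕ, coeff₂ ij.1 ij.2 f * coeff k (u * (xt ^ ij.1 * yt ^ ij.2)) := by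
  have hmul : ∀ p : ℕ × ℕ, coeff p.1 u * coeff p.2 (substGen xt yt f) =
      ∑' ij : ℕ × ℕ, coeff p.1 u * (coeff₂ ij.1 ij.2 f * coeff p.2 (xt ^ ij.1 * yt ^ ij.2)) := by
    intro p
    rw [coeff_substGen, tsum_mul_left]
  have hswap := Summable.tsum_finsetSum (s := Finset.HasAntidiagonal.antidiagonal k)
    (f := fun (p : ℕ × ℕ) (ij : ℕ × ℕ) =>
      coeff p.1 u * (coeff₂ ij.1 ij.2 f * coeff p.2 (xt ^ ij.1 * yt ^ ij.2)))
    fun p _ => (hf p.2).mul_left (coeff p.1 u)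
  rw [coeff_mul, Finset.sum_congr rfl fun p _ => hmul p, ← hswap]
  refine tsum_congr fun ij => ?_
  rw [coeff_mul, Finset.mul_sum]
  exact Finset.sum_congr rfl fun p _ => by ring

theorem substGen_X_one_mul (hf : SubstSummable xt yt f) :
    substGen xt yt (MvPowerSeries.X 1 * f) = yt * substGen xt yt f := by
  ext k
  have hsupp : Function.support (fun pq : ℕ × ℕ =>
      coeff₂ pq.1 pq.2 (MvPowerSeries.X 1 * f) * coeff k (xt ^ pq.1 * yt ^ pq.2)) ⊆
      Set.range fun ij : ℕ × ℕ => (ij.1, ij.2 + 1) := by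
    rintro ⟨p, _ | q⟩ hpq
    · simp [coeff₂_X_one_mul_of_right_eq_zero] at hpq
    · exact ⟨(p, q), rfl⟩
  have hinj : Function.Injective fun ij : ℕ × ℕ => (ij.1, ij.2 + 1) :=
    fun _ _ h => by simp only [Prod.ext_iff] at h ⊢; omega
  rw [coeff_substGen, ← hinj.tsum_eq hsupp, coeff_mul_substGen xt yt f hf]
  refine tsum_congr fun ij => ?_
  rw [coeff₂_X_one_mul_succ, pow_succ]
  ring_nf

theorem substGen_add (hf : SubstSummable xt yt f) (hg : SubstSummable xt yt g) :
    substGen xt yt (f + g) = substGen xt yt f + substGen xt yt g := by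
  ext k
  simp only [coeff_substGen, map_add, add_mul]
  exact (hf k).tsum_add (hg k)

theorem substSummable_X_pow_of_coeff₂_eq_zero {n m : ℕ} (hn : 1 ≤ n)
    (hg : ∀ i j, i + m < j → coeff₂ i j g = 0) : SubstSummable (X ^ n) yt g := by
  intro k
  refine summable_of_ne_finset_zero (s := Finset.range (k + 1) ×ˢ Finset.range (k + m + 1))
    fun ⟨i, j⟩ hij => ?_
  simp only [Finset.mem_product, Finset.mem_range, not_and_or, not_lt] at hij
  by_cases hi : k < i
  · rw [← pow_mul, coeff_X_pow_mul', if_neg (by nlinarith), mul_zero]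
  · rw [hg i j (by omega), zero_mul]

end Substitution

theorem X_pow_mul_substGen_eq_of_X_zero_mul_eq {n : ℕ} (hn : 1 ≤ n)
    (a b abar : MvPowerSeries (Fin 2) ℂ) (ybar : PowerSeries ℂ)
    (habar : MvPowerSeries.X 0 * abar = blowSubst a + MvPowerSeries.X 1 * blowSubst b) :
    X ^ n * substGen (X ^ n) ybar abar =
      substGen (X ^ n) ybar (blowSubst a) + ybar * substGen (X ^ n) ybar (blowSubst b) := by
  have hsum_blow (f : MvPowerSeries (Fin 2) ℂ) : SubstSummable (X ^ n) ybar (blowSubst f) :=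
    substSummable_X_pow_of_coeff₂_eq_zero ybar _ (m := 0) hn fun i j hij => by
      rw [coeff₂_blowSubst, if_neg (by omega)]
  have hsum_X_one : SubstSummable (X ^ n) ybar (MvPowerSeries.X 1 * blowSubst b) :=
    substSummable_X_pow_of_coeff₂_eq_zero ybar _ (m := 1) hn fun i j hij => by
      obtain ⟨j, rfl⟩ : ∃ j', j = j' + 1 := ⟨j - 1, by omega⟩
      rw [coeff₂_X_one_mul_succ, coeff₂_blowSubst, if_neg (by omega)]
  rw [← substGen_X_pow_X_zero_mul, habar, substGen_add _ _ _ _ (hsum_blow a) hsum_X_one,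
    substGen_X_one_mul _ _ _ (hsum_blow b)]

theorem derivative_X_pow_mul {R : Type*} [CommSemiring R] (n : ℕ) (g : R⟦X⟧) :
    derivative R (X ^ n * g) = C (n : R) * X ^ (n - 1) * g + X ^ n * derivative R g := by
  rw [Derivation.leibniz, derivative_pow, derivative_X, smul_eq_mul, smul_eq_mul, map_natCast]
  ring

theorem contact_of_form_under_blowup_general
    (n : ℕ) (hn : 1 ≤ n)
    (a b : MvPowerSeries (Fin 2) ℂ)
    (y ybar : PowerSeries ℂ)
    (hybar : y = PowerSeries.X ^ n * ybar)
    (abar : MvPowerSeries (Fin 2) ℂ)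
    (habar : MvPowerSeries.X (0 : Fin 2) * abar =
      blowSubst a + MvPowerSeries.X (1 : Fin 2) * blowSubst b) :
    PowerSeries.order
        (substGen (PowerSeries.X ^ n) y a *
            (PowerSeries.C (n : ℂ) * PowerSeries.X ^ (n - 1)) +
          substGen (PowerSeries.X ^ n) y b * PowerSeries.derivativeFun y)
      = (n : ℕ∞) +
        PowerSeries.order
          (substGen (PowerSeries.X ^ n) ybar abar *
              (PowerSeries.C (n : ℂ) * PowerSeries.X ^ (n - 1)) +
            substGen (PowerSeries.X ^ n) ybar (blowSubst b) *
              PowerSeries.derivativeFun ybar) := by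
  have hderivative (g : PowerSeries ℂ) : derivativeFun g = derivative ℂ g := rfl
  have hsubst := X_pow_mul_substGen_eq_of_X_zero_mul_eq hn a b abar ybar habar
  have hform : substGen (X ^ n) y a * (C (n : ℂ) * X ^ (n - 1)) +
        substGen (X ^ n) y b * derivative ℂ y =
      X ^ n * (substGen (X ^ n) ybar abar * (C (n : ℂ) * X ^ (n - 1)) +
        substGen (X ^ n) ybar (blowSubst b) * derivative ℂ ybar) := by
    rw [hybar, ← substGen_blowSubst, ← substGen_blowSubst, derivative_X_pow_mul]
    linear_combination (-(C (n : ℂ) * X ^ (n - 1))) * hsubst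
  rw [hderivative, hderivative, hform, order_mul, order_X_pow]

theorem contact_of_form_under_blowup
    (n : ℕ) (hn : 1 ≤ n)
    (a b : MvPowerSeries (Fin 2) ℂ) (ha : a ∈ mIdeal) (hb : b ∈ mIdeal)
    (y ybar : PowerSeries ℂ)
    (hybar : y = PowerSeries.X ^ n * ybar)
    (abar : MvPowerSeries (Fin 2) ℂ)
    (habar : MvPowerSeries.X (0 : Fin 2) * abar =
      blowSubst a + MvPowerSeries.X (1 : Fin 2) * blowSubst b) :
    PowerSeries.order
        (substGen (PowerSeries.X ^ n) y a *
            (PowerSeries.C (n : ℂ) * PowerSeries.X ^ (n - 1)) +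
          substGen (PowerSeries.X ^ n) y b * PowerSeries.derivativeFun y)
      = (n : ℕ∞) +
        PowerSeries.order
          (substGen (PowerSeries.X ^ n) ybar abar *
              (PowerSeries.C (n : ℂ) * PowerSeries.X ^ (n - 1)) +
            substGen (PowerSeries.X ^ n) ybar (blowSubst b) *
              PowerSeries.derivativeFun ybar) :=
  contact_of_form_under_blowup_general n hn a b y ybar hybar abar habar
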